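/- arXiv:1712.09597 — 2 statements merged into one kernel-verified Lean document; each statement's English description precedes it below -/
import Mathlib

section
/- The 4-stage commutator-free scheme with c = (0, 1/2, 1/2, 1), a_21 = 1/2, a_32 = 1/2, a_4 = (0, 0, 1) (realized via the two rows α_{4,1} = (1/2, 0, 0), α_{4,2} = (−1/2, 0, 1)), β_1 = (1/4, 1/6, 1/6, −1/12), β_2 = (−1/12, 1/6, 1/6, 1/4), and b = β_1 + β_2 = (1/6, 1/3, 1/3, 1/6), satisfies: the classical order-4 Runge–Kutta conditions ∑ b_k = 1, ∑ b_k c_k = 1/2, ∑ b_k c_k² = 1/3, ∑_{i,j} b_i a_{ij} c_j = 1/6, ∑ b_k c_k³ = 1/4, ∑_{i,j} b_i c_i a_{ij} c_j = 1/8, ∑_{i,j} b_i a_{ij} c_j² = 1/12, ∑_{i,j,k} b_i a_{ij} a_{jk} c_k = 1/24; the non-classical third-order condition ∑_k β_1^k c_k + (1/2)∑_k β_2^k = 1/3; and the non-classical fourth-order conditions ∑_k β_1^k c_k + (1/3)∑_k β_2^k = 1/4, ∑_k β_1^k c_k² + (1/3)∑_k β_2^k = 1/6, and ∑_{j,k}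 β_1^k a_{kj} c_j + (1/6)∑_k β_2^k = 1/12. -/
/-! The scheme carries the classical RK4 tableau `(a, b, c)`, so the classical conditions are
those of RK4; the non-classical ones only test how the RK4 weights are split as `β₁ + β₂`. -/

noncomputable section

def rk4A : Fin 4 → Fin 4 → ℝ :=
  ![![0, 0, 0, 0], ![1/2, 0, 0, 0], ![0, 1/2, 0, 0], ![0, 0, 1, 0]]

def rk4B : Fin 4 → ℝ := ![1/6, 1/3, 1/3, 1/6]

def rk4C : Fin 4 → ℝ := ![0, 1/2, 1/2, 1]

def cf4α41 : Fin 4 → ℝ := ![1/2, 0, 0, 0]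

def cf4α42 : Fin 4 → ℝ := ![-1/2, 0, 1, 0]

def cf4β1 : Fin 4 → ℝ := ![1/4, 1/6, 1/6, -1/12]

def cf4β2 : Fin 4 → ℝ := ![-1/12, 1/6, 1/6, 1/4]

end

theorem rk4_classical_order_four :
    (∑ k, rk4B k = 1) ∧
    (∑ k, rk4B k * rk4C k = 1 / 2) ∧
    (∑ k, rk4B k * rk4C k ^ 2 = 1 / 3) ∧
    (∑ i, ∑ j, rk4B i * rk4A i j * rk4C j = 1 / 6) ∧
    (∑ k, rk4B k * rk4C k ^ 3 = 1 / 4) ∧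
    (∑ i, ∑ j, rk4B i * rk4C i * rk4A i j * rk4C j = 1 / 8) ∧
    (∑ i, ∑ j, rk4B i * rk4A i j * rk4C j ^ 2 = 1 / 12) ∧
    (∑ i, ∑ j, ∑ k, rk4B i * rk4A i j * rk4A j k * rk4C k = 1 / 24) := by
  norm_num [Fin.sum_univ_four, rk4A, rk4B, rk4C, Matrix.cons_val_two,
    Matrix.cons_val_three]

theorem rk4A_three_eq_cf4α41_add_cf4α42 (j : Fin 4) : rk4A 3 j = cf4α41 j + cf4α42 j := by
  fin_cases j <;> norm_num [rk4A, cf4α41, cf4α42, Matrix.cons_val_three]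

theorem cf4β1_add_cf4β2 : (fun k => cf4β1 k + cf4β2 k) = rk4B := by
  funext k
  fin_cases k <;> norm_num [cf4β1, cf4β2, rk4B]

theorem cf4_nonclassical_order_four :
    (∑ k, cf4β1 k * rk4C k + (1 / 2) * ∑ k, cf4β2 k = 1 / 3) ∧
    (∑ k, cf4β1 k * rk4C k + (1 / 3) * ∑ k, cf4β2 k = 1 / 4) ∧
    (∑ k, cf4β1 k * rk4C k ^ 2 + (1 / 3) * ∑ k, cf4β2 k = 1 / 6) ∧
    (∑ k, ∑ j, cf4β1 k * rk4A k j * rk4C j + (1 / 6) * ∑ k, cf4β2 k = 1 / 12) := by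
  norm_num [Fin.sum_univ_four, rk4A, rk4C, cf4β1, cf4β2, Matrix.cons_val_two,
    Matrix.cons_val_three]

/-- The 4-stage commutator-free scheme of Owren extending the classical RK4 method:
with `c = (0, 1/2, 1/2, 1)`, `a₂₁ = 1/2`, `a₃₂ = 1/2`, fourth stage row
`a₄ = (0, 0, 1)` realized via `α₄₁ = (1/2, 0, 0)` and `α₄₂ = (-1/2, 0, 1)`,
`β₁ = (1/4, 1/6, 1/6, -1/12)`, `β₂ = (-1/12, 1/6, 1/6, 1/4)`,
`b = β₁ + β₂ = (1/6, 1/3, 1/3, 1/6)`, the classical order-4 conditions, the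
non-classical third-order condition, and the non-classical fourth-order conditions
all hold. -/
theorem cf4_owren_scheme_order_conditions
    (a : Fin 4 → Fin 4 → ℝ) (α41 α42 c b β1 β2 : Fin 4 → ℝ)
    (ha : a = ![![0, 0, 0, 0], ![1/2, 0, 0, 0], ![0, 1/2, 0, 0], ![0, 0, 1, 0]])
    (hα41 : α41 = ![1/2, 0, 0, 0]) (hα42 : α42 = ![-1/2, 0, 1, 0])
    (hc : c = ![0, 1/2, 1/2, 1])
    (hβ1 : β1 = ![1/4, 1/6, 1/6, -1/12])
    (hβ2 : β2 = ![-1/12, 1/6, 1/6, 1/4])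
    (hb : b = fun k => β1 k + β2 k) :
    (∀ j, a 3 j = α41 j + α42 j) ∧
    b = ![1/6, 1/3, 1/3, 1/6] ∧
    (∑ k, b k = 1) ∧
    (∑ k, b k * c k = 1 / 2) ∧
    (∑ k, b k * c k ^ 2 = 1 / 3) ∧
    (∑ i, ∑ j, b i * a i j * c j = 1 / 6) ∧
    (∑ k, b k * c k ^ 3 = 1 / 4) ∧
    (∑ i, ∑ j, b i * c i * a i j * c j = 1 / 8) ∧
    (∑ i, ∑ j, b i * a i j * c j ^ 2 = 1 / 12) ∧
    (∑ i, ∑ j, ∑ k, b i * a i j * a j k * c k = 1 / 24) ∧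
    (∑ k, β1 k * c k + (1 / 2) * ∑ k, β2 k = 1 / 3) ∧
    (∑ k, β1 k * c k + (1 / 3) * ∑ k, β2 k = 1 / 4) ∧
    (∑ k, β1 k * c k ^ 2 + (1 / 3) * ∑ k, β2 k = 1 / 6) ∧
    (∑ k, ∑ j, β1 k * a k j * c j + (1 / 6) * ∑ k, β2 k = 1 / 12) := by
  subst ha hα41 hα42 hc hβ1 hβ2
  obtain rfl : b = rk4B := hb.trans cf4β1_add_cf4β2
  obtain ⟨h1, h2, h3, h4, h5, h6, h7, h8⟩ := rk4_classical_order_four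
  exact ⟨rk4A_three_eq_cf4α41_add_cf4α42, rfl, h1, h2, h3, h4, h5, h6, h7, h8,
    cf4_nonclassical_order_four⟩
end

section
/- The polynomial 144z⁵ + 90z⁴ − 3z³ − 13z² − 5z − 1 has exactly one real root, i.e. there exists a unique ω ∈ ℝ with 144ω⁵ + 90ω⁴ − 3ω³ − 13ω² − 5ω − 1 = 0. -/
/-!
The quintic `f` is negative on `(-∞, 3/10]` and strictly increasing on `[3/10, ∞)`, so it has at
most one real root; since `f 0 < 0 < f 1`, the intermediate value theorem provides one.
-/

def cf43Quintic (x : ℝ) : ℝ := 144 * x ^ 5 + 90 * x ^ 4 - 3 * x ^ 3 - 13 * x ^ 2 - 5 * x - 1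

theorem continuous_cf43Quintic : Continuous cf43Quintic := by
  unfold cf43Quintic
  fun_prop

theorem cf43Quintic_neg_of_le {x : ℝ} (hx : x ≤ 3 / 10) : cf43Quintic x < 0 := by
  have ht : 0 ≤ 3 / 10 - x := by linarith
  unfold cf43Quintic
  nlinarith [mul_nonneg ht (sq_nonneg (12 * (3 / 10 - x) ^ 2 - 51 / 4 * (3 / 10 - x) + 1921 / 640)),
    sq_nonneg (3 / 10 - x - 3 / 4), sq_nonneg (3 / 10 - x), sq_nonneg (3 / 10 - x - 7 / 10)]

/-- In `u = x - 3/10` every non-constant coefficient of the quintic is positive. -/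
theorem cf43Quintic_strictMonoOn : StrictMonoOn cf43Quintic (Set.Ici (3 / 10)) := by
  intro x hx y hy hxy
  have hu : 0 ≤ x - 3 / 10 := sub_nonneg.mpr hx
  have hd : 0 < y - x := sub_pos.mpr hxy
  unfold cf43Quintic
  nlinarith [mul_pos hd hd, mul_pos (mul_pos hd hd) hd, mul_pos (mul_pos hd hd) (mul_pos hd hd),
    mul_nonneg hu hu, mul_nonneg (mul_nonneg hu hu) hu,
    mul_nonneg (mul_nonneg hu hu) (mul_nonneg hu hu)]

theorem three_tenths_lt_of_cf43Quintic_eq_zero {x : ℝ} (hx : cf43Quintic x = 0) : 3 / 10 < x :=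
  not_le.mp fun h => (cf43Quintic_neg_of_le h).ne hx

/-- The quintic `144 z⁵ + 90 z⁴ - 3 z³ - 13 z² - 5 z - 1` has exactly one real root. -/
theorem cf43_quintic_unique_real_root :
    ∃! ω : ℝ, 144 * ω ^ 5 + 90 * ω ^ 4 - 3 * ω ^ 3 - 13 * ω ^ 2 - 5 * ω - 1 = 0 := by
  obtain ⟨ω, -, hω⟩ : ∃ ω ∈ Set.Icc (0 : ℝ) 1, cf43Quintic ω = 0 :=
    intermediate_value_Icc zero_le_one continuous_cf43Quintic.continuousOn
      (by norm_num [cf43Quintic])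
  refine ⟨ω, hω, fun y hy => ?_⟩
  have hωy : cf43Quintic y = cf43Quintic ω := hy.trans hω.symm
  exact cf43Quintic_strictMonoOn.injOn
    (three_tenths_lt_of_cf43Quintic_eq_zero hy).le
    (three_tenths_lt_of_cf43Quintic_eq_zero hω).le hωy
end
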